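/- arXiv:2310.07735 — 9 statements merged into one kernel-verified Lean document; each statement's English description precedes it below -/
import Mathlib

section
/- There cannot be two consecutive terms of q: for all n ≥ 1, q(n+1) - q(n) ≥ 2. -/
/-!
`p (n + 1)` is the least positive integer missing from a set that grows with `n`, so `p` is
nondecreasing; it is even strictly increasing, because `p (n + 1)` must avoid `p n`.
Hence `q (n + 1) - q n = (p (n + 1) - p n) + 1 ≥ 2`.
-/

namespace Wythoff

def unused (p q : ℕ → ℕ) (n : ℕ) : Set ℕ :=
  {m | 0 < m ∧ ∀ i, 1 ≤ i → i ≤ n → m ≠ p i ∧ m ≠ q i}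

variable {p q : ℕ → ℕ}

theorem unused_succ_subset (n : ℕ) : unused p q (n + 1) ⊆ unused p q n :=
  fun _ ⟨hpos, hne⟩ => ⟨hpos, fun i hi hin => hne i hi (by omega)⟩

theorem ne_of_mem_unused {m n : ℕ} (hm : m ∈ unused p q n) (hn : 1 ≤ n) : m ≠ p n :=
  (hm.2 n hn le_rfl).1

theorem lt_succ_of_isLeast_unused (hp1 : p 1 = 1)
    (hmin : ∀ n, 1 ≤ n → IsLeast (unused p q n) (p (n + 1))) {n : ℕ} (hn : 1 ≤ n) :
    p n < p (n + 1) := by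
  have hne : p (n + 1) ≠ p n := ne_of_mem_unused (hmin n hn).1 hn
  obtain rfl | ⟨m, hm, rfl⟩ : n = 1 ∨ ∃ m, 1 ≤ m ∧ n = m + 1 :=
    (eq_or_lt_of_le hn).imp Eq.symm fun h => ⟨n - 1, by omega, by omega⟩
  · have hpos : 0 < p (1 + 1) := (hmin 1 le_rfl).1.1
    omega
  · have hle : p (m + 1) ≤ p (m + 1 + 1) :=
      (hmin (m + 1) hn).mono (hmin m hm) (unused_succ_subset m)
    omega

end Wythoff

/-- Wythoff sequences: `p 1 = 1`, `q n = p n + n` for `n ≥ 1`, and `p (n+1)` is the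
smallest positive integer not contained in `U_n = {p 1, …, p n, q 1, …, q n}`. -/
theorem stmt_1 (p q : ℕ → ℕ)
    (hp1 : p 1 = 1)
    (hq : ∀ n, 1 ≤ n → q n = p n + n)
    (hmin : ∀ n, 1 ≤ n →
      IsLeast {m : ℕ | 0 < m ∧ ∀ i, 1 ≤ i → i ≤ n → m ≠ p i ∧ m ≠ q i} (p (n + 1))) :
    ∀ n, 1 ≤ n → q n + 2 ≤ q (n + 1) := by
  intro n hn
  have hlt : p n < p (n + 1) := Wythoff.lt_succ_of_isLeast_unused hp1 hmin hn
  rw [hq n hn, hq (n + 1) (by omega)]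
  omega
end

section
/- The sequences p and q partition the positive integers: every positive integer N appears exactly once among the values of p and q; that is, every N ≥ 1 is equal to p(k) for some k ≥ 1 or to q(k) for some k ≥ 1, no positive integer is both a value of p and a value of q, and both p and q take each of their values exactly once (they are injective). -/
/-!
Every candidate for step `n + 1` is a candidate for step `n`, so minimality makes `p`
nondecreasing, and since `p (n + 1)` avoids `p n` it is strictly increasing; hence `n ≤ p n`
and `q n = p n + n` is strictly increasing too. A number `N` missed by both sequences would be a
candidate at step `N`, forcing `p (N + 1) ≤ N`. Finally `p k ≠ q j`: for `k ≤ j` we have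
`p k ≤ p j < q j`, while for `k > j` the value `q j` was excluded when `p k` was chosen.
-/

namespace Wythoff

/-- The complement of `U_n` in the positive integers; `p (n + 1)` is its least element. -/
def candidates (p q : ℕ → ℕ) (n : ℕ) : Set ℕ :=
  {m | 0 < m ∧ ∀ i, 1 ≤ i → i ≤ n → m ≠ p i ∧ m ≠ q i}

variable {p q : ℕ → ℕ}

theorem candidates_antitone : Antitone (candidates p q) :=
  fun _ _ hnn' _ ⟨hm, havoid⟩ ↦ ⟨hm, fun i hi hin ↦ havoid i hi (hin.trans hnn')⟩

theorem p_lt_p_succ (hp1 : p 1 = 1)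
    (hmin : ∀ n, 1 ≤ n → IsLeast (candidates p q n) (p (n + 1)))
    {n : ℕ} (hn : 1 ≤ n) : p n < p (n + 1) := by
  obtain ⟨hpos, havoid⟩ := (hmin n hn).1
  have hne : p (n + 1) ≠ p n := (havoid n hn le_rfl).1
  have hle : p n ≤ p (n + 1) := by
    rcases hn.eq_or_lt with rfl | hn2
    · omega
    · obtain ⟨m, rfl⟩ := Nat.exists_eq_add_one_of_ne_zero (by omega : n ≠ 0)
      exact (hmin m (by omega)).2 (candidates_antitone m.le_succ (hmin (m + 1) hn).1)
  omega

theorem p_strictMonoOn (hp1 : p 1 = 1)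
    (hmin : ∀ n, 1 ≤ n → IsLeast (candidates p q n) (p (n + 1))) :
    StrictMonoOn p (Set.Ici 1) :=
  fun _ hk _ _ hkj ↦
    Nat.rel_of_forall_rel_succ_of_le_of_lt (· < ·) (f := p)
      (fun _ hn ↦ p_lt_p_succ hp1 hmin hn) hk hkj

theorem le_p_self (hp1 : p 1 = 1)
    (hmin : ∀ n, 1 ≤ n → IsLeast (candidates p q n) (p (n + 1)))
    {n : ℕ} (hn : 1 ≤ n) : n ≤ p n := by
  induction n, hn using Nat.le_induction with
  | base => exact hp1.ge
  | succ n hn ih => exact ih.trans_lt (p_lt_p_succ hp1 hmin hn)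

theorem q_strictMonoOn (hp1 : p 1 = 1) (hq : ∀ n, 1 ≤ n → q n = p n + n)
    (hmin : ∀ n, 1 ≤ n → IsLeast (candidates p q n) (p (n + 1))) :
    StrictMonoOn q (Set.Ici 1) := fun k hk j hj hkj ↦ by
  have := p_strictMonoOn hp1 hmin hk hj hkj
  rw [hq k hk, hq j hj]
  omega

theorem p_ne_q (hp1 : p 1 = 1) (hq : ∀ n, 1 ≤ n → q n = p n + n)
    (hmin : ∀ n, 1 ≤ n → IsLeast (candidates p q n) (p (n + 1)))
    {k j : ℕ} (hk : 1 ≤ k) (hj : 1 ≤ j) : p k ≠ q j := by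
  rcases le_or_gt k j with hkj | hjk
  · have := (p_strictMonoOn hp1 hmin).monotoneOn hk hj hkj
    rw [hq j hj]
    omega
  · obtain ⟨m, rfl⟩ := Nat.exists_eq_add_one_of_ne_zero (by omega : k ≠ 0)
    exact ((hmin m (by omega)).1.2 j hj (by omega)).2

theorem exists_p_or_q_eq (hp1 : p 1 = 1)
    (hmin : ∀ n, 1 ≤ n → IsLeast (candidates p q n) (p (n + 1)))
    {N : ℕ} (hN : 1 ≤ N) : (∃ k, 1 ≤ k ∧ p k = N) ∨ (∃ k, 1 ≤ k ∧ q k = N) := by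
  by_contra! hmiss
  have hcand : N ∈ candidates p q N :=
    ⟨hN, fun i hi _ ↦ ⟨(hmiss.1 i hi).symm, (hmiss.2 i hi).symm⟩⟩
  have := (hmin N hN).2 hcand
  have := (le_p_self hp1 hmin hN).trans_lt (p_lt_p_succ hp1 hmin hN)
  omega

end Wythoff

open Wythoff in
/-- Wythoff sequences: `p 1 = 1`, `q n = p n + n` for `n ≥ 1`, and `p (n+1)` is the
smallest positive integer not contained in `U_n = {p 1, …, p n, q 1, …, q n}`. -/
theorem stmt_2 (p q : ℕ → ℕ)
    (hp1 : p 1 = 1)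
    (hq : ∀ n, 1 ≤ n → q n = p n + n)
    (hmin : ∀ n, 1 ≤ n →
      IsLeast {m : ℕ | 0 < m ∧ ∀ i, 1 ≤ i → i ≤ n → m ≠ p i ∧ m ≠ q i} (p (n + 1))) :
    (∀ N : ℕ, 1 ≤ N → (∃ k, 1 ≤ k ∧ p k = N) ∨ (∃ k, 1 ≤ k ∧ q k = N)) ∧
    (∀ k j, 1 ≤ k → 1 ≤ j → p k ≠ q j) ∧
    (∀ k j, 1 ≤ k → 1 ≤ j → p k = p j → k = j) ∧
    (∀ k j, 1 ≤ k → 1 ≤ j → q k = q j → k = j) :=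
  ⟨fun _ hN ↦ exists_p_or_q_eq hp1 hmin hN,
    fun _ _ hk hj ↦ p_ne_q hp1 hq hmin hk hj,
    fun _ _ hk hj h ↦ (p_strictMonoOn hp1 hmin).injOn hk hj h,
    fun _ _ hk hj h ↦ (q_strictMonoOn hp1 hq hmin).injOn hk hj h⟩
end

section
/- For all n ≥ 1, the difference p(n+1) - p(n) is either 1 or 2. -/
/-!
`p` is strictly increasing: the candidates for `p (n + 2)` are among those for `p (n + 1)`,
and `p (n + 2) ≠ p (n + 1)`. So `p i ≤ p n` for `i ≤ n`, and `q i = p i + i` grows by at least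
two per step. Hence `p n + 1` and `p n + 2` cannot both lie in `U_n`, which puts the least
positive integer outside `U_n` in `(p n, p n + 2]`.
-/

namespace Wythoff

/-- The positive integers outside `U_n`. -/
def admissible (p q : ℕ → ℕ) (n : ℕ) : Set ℕ :=
  {m | 0 < m ∧ ∀ i, 1 ≤ i → i ≤ n → m ≠ p i ∧ m ≠ q i}

variable {p q : ℕ → ℕ}

theorem admissible_antitone (p q : ℕ → ℕ) : Antitone (admissible p q) :=
  fun _ _ hnm _ ⟨hpos, hne⟩ => ⟨hpos, fun i hi hin => hne i hi (hin.trans hnm)⟩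

theorem isLeast_admissible_zero (hp1 : p 1 = 1) : IsLeast (admissible p q 0) (p 1) :=
  ⟨⟨by omega, fun i hi hi0 => by omega⟩, fun _ hm => hp1.symm ▸ hm.1⟩

theorem isLeast_admissible (hp1 : p 1 = 1)
    (hmin : ∀ n, 1 ≤ n → IsLeast (admissible p q n) (p (n + 1))) (n : ℕ) :
    IsLeast (admissible p q n) (p (n + 1)) := by
  rcases Nat.eq_zero_or_pos n with rfl | hn
  · exact isLeast_admissible_zero hp1
  · exact hmin n hn

theorem strictMonoOn_of_isLeast_admissible
    (hmin : ∀ n, IsLeast (admissible p q n) (p (n + 1))) : StrictMonoOn p (Set.Ici 1) := by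
  refine strictMonoOn_of_lt_add_one Set.ordConnected_Ici fun n _ hn _ => ?_
  obtain ⟨k, rfl⟩ := Nat.exists_eq_add_of_le' (Set.mem_Ici.1 hn)
  show p (k + 1) < p (k + 2)
  have hle : p (k + 1) ≤ p (k + 2) :=
    (hmin k).2 (admissible_antitone p q k.le_succ (hmin (k + 1)).1)
  have hne : p (k + 2) ≠ p (k + 1) := ((hmin (k + 1)).1.2 (k + 1) (by omega) le_rfl).1
  omega

theorem add_one_ne_of_strictMonoOn (hp : StrictMonoOn p (Set.Ici 1))
    (hq : ∀ n, 1 ≤ n → q n = p n + n) {i j : ℕ} (hi : 1 ≤ i) (hj : 1 ≤ j) :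
    q i + 1 ≠ q j := by
  rw [hq i hi, hq j hj]
  rcases lt_or_ge i j with hij | hji
  · have := hp hi hj hij
    omega
  · have := (hp.le_iff_le hj hi).2 hji
    omega

theorem add_one_mem_or_add_two_mem_admissible (hp : StrictMonoOn p (Set.Ici 1))
    (hq : ∀ n, 1 ≤ n → q n = p n + n) (n : ℕ) :
    p n + 1 ∈ admissible p q n ∨ p n + 2 ∈ admissible p q n := by
  have hp_le {i : ℕ} (hi : 1 ≤ i) (hin : i ≤ n) : p i ≤ p n :=
    (hp.le_iff_le hi (hi.trans hin)).2 hin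
  by_contra! ⟨h1, h2⟩
  simp only [admissible, Set.mem_ofPred_eq, not_and, not_forall] at h1 h2
  obtain ⟨i, hi, hin, hi_mem⟩ := h1 (by omega)
  obtain ⟨j, hj, hjn, hj_mem⟩ := h2 (by omega)
  have hqi : q i = p n + 1 := by have := hp_le hi hin; omega
  have hqj : q j = p n + 2 := by have := hp_le hj hjn; omega
  exact add_one_ne_of_strictMonoOn hp hq hi hj (by omega)

end Wythoff

/-- Wythoff sequences: `p 1 = 1`, `q n = p n + n` for `n ≥ 1`, and `p (n+1)` is the
smallest positive integer not contained in `U_n = {p 1, …, p n, q 1, …, q n}`. -/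
theorem stmt_3 (p q : ℕ → ℕ)
    (hp1 : p 1 = 1)
    (hq : ∀ n, 1 ≤ n → q n = p n + n)
    (hmin : ∀ n, 1 ≤ n →
      IsLeast {m : ℕ | 0 < m ∧ ∀ i, 1 ≤ i → i ≤ n → m ≠ p i ∧ m ≠ q i} (p (n + 1))) :
    ∀ n, 1 ≤ n → p (n + 1) = p n + 1 ∨ p (n + 1) = p n + 2 := by
  intro n hn
  have hleast := Wythoff.isLeast_admissible hp1 hmin
  have hp := Wythoff.strictMonoOn_of_isLeast_admissible hleast
  have hlt : p n < p (n + 1) := hp (Set.mem_Ici.2 hn) (Set.mem_Ici.2 (by omega)) n.lt_succ_self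
  rcases Wythoff.add_one_mem_or_add_two_mem_admissible hp hq n with h | h <;>
  · have := (hleast n).2 h
    omega
end

section
/- For all n ≥ 1, the difference q(n+1) - q(n) is either 2 or 3. -/
/-!
Each `p (n + 1)` exceeds `p n`: it avoids `p n`, and for `n ≥ 2` it is also a candidate for
`p n`, which is the least one. Hence `p` is strictly increasing on `n ≥ 1`, and `q = p + id`
grows by at least `2` per step. So `p n + 1` and `p n + 2` avoid all of `p 1, …, p n`, and they
cannot both be values of `q`; one of them is a candidate for `p (n + 1)`, giving
`p (n + 1) - p n ∈ {1, 2}` and `q (n + 1) - q n ∈ {2, 3}`.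
-/

def wythoffCandidates (p q : ℕ → ℕ) (n : ℕ) : Set ℕ :=
  {m | 0 < m ∧ ∀ i, 1 ≤ i → i ≤ n → m ≠ p i ∧ m ≠ q i}

lemma wythoffCandidates_antitone (p q : ℕ → ℕ) : Antitone (wythoffCandidates p q) :=
  fun _ _ hmn _ ⟨hpos, havoid⟩ => ⟨hpos, fun i hi hin => havoid i hi (hin.trans hmn)⟩

namespace Wythoff

variable {p q : ℕ → ℕ}

lemma lt_succ (hp1 : p 1 = 1)
    (hmin : ∀ n, 1 ≤ n → IsLeast (wythoffCandidates p q n) (p (n + 1)))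
    {n : ℕ} (hn : 1 ≤ n) : p n < p (n + 1) := by
  obtain ⟨⟨hpos, havoid⟩, -⟩ := hmin n hn
  refine lt_of_le_of_ne ?_ (havoid n hn le_rfl).1.symm
  obtain rfl | ⟨m, hm, rfl⟩ : n = 1 ∨ ∃ m, 1 ≤ m ∧ n = m + 1 :=
    (eq_or_lt_of_le hn).imp Eq.symm fun h => ⟨n - 1, by omega, by omega⟩
  · omega
  · exact (hmin (m + 1) hn).mono (hmin m hm) (wythoffCandidates_antitone p q m.le_succ)

lemma strictMonoOn (hp1 : p 1 = 1)
    (hmin : ∀ n, 1 ≤ n → IsLeast (wythoffCandidates p q n) (p (n + 1))) :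
    StrictMonoOn p (Set.Ici 1) :=
  strictMonoOn_of_lt_add_one Set.ordConnected_Ici fun _ _ ha _ => lt_succ hp1 hmin ha

lemma add_two_le_of_strictMonoOn (hp : StrictMonoOn p (Set.Ici 1))
    (hq : ∀ n, 1 ≤ n → q n = p n + n) {i j : ℕ} (hi : 1 ≤ i) (hij : i < j) :
    q i + 2 ≤ q j := by
  have hpij : p i < p j := hp (Set.mem_Ici.2 hi) (Set.mem_Ici.2 (hi.trans hij.le)) hij
  rw [hq i hi, hq j (by omega)]
  omega

lemma succ_le_add_two (hp : StrictMonoOn p (Set.Ici 1))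
    (hq : ∀ n, 1 ≤ n → q n = p n + n)
    (hmin : ∀ n, 1 ≤ n → IsLeast (wythoffCandidates p q n) (p (n + 1)))
    {n : ℕ} (hn : 1 ≤ n) : p (n + 1) ≤ p n + 2 := by
  have hnotp : ∀ k, 0 < k → ∀ i, 1 ≤ i → i ≤ n → p n + k ≠ p i := fun k hk i hi hin => by
    have := hp.monotoneOn (Set.mem_Ici.2 hi) (Set.mem_Ici.2 hn) hin
    omega
  by_cases hq1 : ∃ i, 1 ≤ i ∧ i ≤ n ∧ p n + 1 = q i
  · obtain ⟨i, hi, -, hqi⟩ := hq1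
    -- `q i = p n + 1`, and no other value of `q` lies within distance `1` of it.
    refine ((hmin n hn).2 ⟨by omega, fun j hj hjn => ⟨hnotp 2 two_pos j hj hjn, fun hqj => ?_⟩⟩)
    rcases lt_trichotomy i j with h | rfl | h
    · have := add_two_le_of_strictMonoOn hp hq hi h; omega
    · omega
    · have := add_two_le_of_strictMonoOn hp hq hj h; omega
  · push Not at hq1
    exact ((hmin n hn).2 ⟨by omega, fun j hj hjn =>
      ⟨hnotp 1 one_pos j hj hjn, hq1 j hj hjn⟩⟩).trans (by omega)

end Wythoff

/-- Wythoff sequences: `p 1 = 1`, `q n = p n + n` for `n ≥ 1`, and `p (n+1)` is the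
smallest positive integer not contained in `U_n = {p 1, …, p n, q 1, …, q n}`. -/
theorem stmt_4 (p q : ℕ → ℕ)
    (hp1 : p 1 = 1)
    (hq : ∀ n, 1 ≤ n → q n = p n + n)
    (hmin : ∀ n, 1 ≤ n →
      IsLeast {m : ℕ | 0 < m ∧ ∀ i, 1 ≤ i → i ≤ n → m ≠ p i ∧ m ≠ q i} (p (n + 1))) :
    ∀ n, 1 ≤ n → q (n + 1) = q n + 2 ∨ q (n + 1) = q n + 3 := by
  intro n hn
  have hlt := Wythoff.lt_succ hp1 hmin hn
  have hle := Wythoff.succ_le_add_two (Wythoff.strictMonoOn hp1 hmin) hq hmin hn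
  rw [hq n hn, hq (n + 1) (by omega)]
  omega
end

section
/- There do not exist three consecutive values of p: there is no positive integer m such that m, m+1 and m+2 all lie in the range of p (i.e., all three are equal to p(k) for some k ≥ 1). -/
/-!
`p` is strictly increasing with gaps `1` or `2`, the values of `p` and `q` partition the
positive integers, and `q n = p (p n) + 1`. Hence a gap of `1` after `p k` forces `k` itself to be
a value of `q`: otherwise `k = p s`, and then `p k + 1 = q s` would be a value of both sequences.
Three consecutive values `p k, p k + 1, p k + 2` would thus make `k` and `k + 1` both values of
`q`, which is impossible since `q` grows by at least `2` at each step.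
-/

/-- The positive integers outside `U_n`. -/
def candidates (p q : ℕ → ℕ) (n : ℕ) : Set ℕ :=
  {m | 0 < m ∧ ∀ i, 1 ≤ i → i ≤ n → m ≠ p i ∧ m ≠ q i}

structure IsWythoffPair (p q : ℕ → ℕ) : Prop where
  one : p 1 = 1
  q_eq : ∀ n, 1 ≤ n → q n = p n + n
  isLeast : ∀ n, 1 ≤ n → IsLeast (candidates p q n) (p (n + 1))

namespace IsWythoffPair

variable {p q : ℕ → ℕ} (h : IsWythoffPair p q)
include h

theorem apply_lt_apply_succ {n : ℕ} (hn : 1 ≤ n) : p n < p (n + 1) := by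
  obtain ⟨hpos, hfresh⟩ := (h.isLeast n hn).1
  have hne : p (n + 1) ≠ p n := (hfresh n hn le_rfl).1
  obtain rfl | ⟨k, hk, rfl⟩ : n = 1 ∨ ∃ k, 1 ≤ k ∧ n = k + 1 :=
    (eq_or_lt_of_le hn).imp Eq.symm fun hlt => ⟨n - 1, by omega, by omega⟩
  · rw [h.one] at hne ⊢
    omega
  · have : p (k + 1) ≤ p (k + 1 + 1) :=
      (h.isLeast k hk).2 ⟨hpos, fun i hi hik => hfresh i hi (by omega)⟩
    omega

theorem apply_add_sub_le {a b : ℕ} (ha : 1 ≤ a) (hab : a ≤ b) : p a + (b - a) ≤ p b := by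
  induction b, hab using Nat.le_induction with
  | base => simp
  | succ b hab ih =>
    have := h.apply_lt_apply_succ (ha.trans hab)
    omega

theorem le_apply {n : ℕ} (hn : 1 ≤ n) : n ≤ p n := by
  have := h.apply_add_sub_le le_rfl hn
  rw [h.one] at this
  omega

theorem q_add_two_le {a b : ℕ} (ha : 1 ≤ a) (hab : a < b) : q a + 2 ≤ q b := by
  have := h.apply_add_sub_le ha hab.le
  rw [h.q_eq a ha, h.q_eq b (by omega)]
  omega

theorem eq_add_one_of_apply_eq {a b : ℕ} (ha : 1 ≤ a) (hb : 1 ≤ b) (hab : p b = p a + 1) :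
    b = a + 1 := by
  rcases le_or_gt b a with hba | hab'
  · have := h.apply_add_sub_le hb hba
    omega
  · have := h.apply_add_sub_le (a := a + 1) (by omega) hab'
    have := h.apply_lt_apply_succ ha
    omega

theorem apply_ne_q {k i : ℕ} (hk : 1 ≤ k) (hi : 1 ≤ i) : p k ≠ q i := by
  rcases le_or_gt k i with hki | hik
  · have := h.apply_add_sub_le hk hki
    rw [h.q_eq i hi]
    omega
  · obtain ⟨j, rfl⟩ : ∃ j, k = j + 1 := ⟨k - 1, by omega⟩
    exact ((h.isLeast j (by omega)).1.2 i hi (by omega)).2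

theorem apply_succ_eq {n : ℕ} (hn : 1 ≤ n) : p (n + 1) = p n + 1 ∨ p (n + 1) = p n + 2 := by
  have hlt := h.apply_lt_apply_succ hn
  have hp_le : ∀ i, 1 ≤ i → i ≤ n → p i ≤ p n := fun i hi hin => by
    have := h.apply_add_sub_le hi hin
    omega
  suffices p n + 1 ∈ candidates p q n ∨ p n + 2 ∈ candidates p q n by
    rcases this with hmem | hmem <;> have := (h.isLeast n hn).2 hmem <;> omega
  by_cases hq1 : ∃ j, 1 ≤ j ∧ j ≤ n ∧ q j = p n + 1
  · obtain ⟨j, hj, hjn, hqj⟩ := hq1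
    refine .inr ⟨by omega, fun i hi hin => ⟨by have := hp_le i hi hin; omega, fun hqi => ?_⟩⟩
    rcases lt_trichotomy i j with hij | rfl | hji
    · have := h.q_add_two_le hi hij
      omega
    · omega
    · have := h.q_add_two_le hj hji
      omega
  · push Not at hq1
    exact .inl ⟨by omega, fun i hi hin =>
      ⟨by have := hp_le i hi hin; omega, (hq1 i hi hin).symm⟩⟩

theorem exists_apply_eq_or_exists_q_eq {m : ℕ} (hm : 1 ≤ m) :
    (∃ i, 1 ≤ i ∧ p i = m) ∨ ∃ i, 1 ≤ i ∧ q i = m := by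
  by_contra! hcon
  have := (h.isLeast m hm).2
    ⟨hm, fun i hi _ => ⟨fun he => hcon.1 i hi he.symm, fun he => hcon.2 i hi he.symm⟩⟩
  have := h.le_apply (n := m + 1) (by omega)
  omega

theorem apply_apply_add_one {n : ℕ} (hn : 1 ≤ n) : p (p n) + 1 = q n := by
  induction n, hn using Nat.le_induction with
  | base => rw [h.one, h.one, h.q_eq 1 le_rfl, h.one]
  | succ n hn ih =>
    have hpn : 1 ≤ p n := hn.trans (h.le_apply hn)
    -- `p (p n) + 1 = q n` is not a value of `p`
    have hgap : p (p n + 1) = p (p n) + 2 :=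
      (h.apply_succ_eq hpn).resolve_left fun he => h.apply_ne_q (by omega) hn (he.trans ih)
    have hqn := h.q_eq n hn
    have hqn1 := h.q_eq (n + 1) (by omega)
    rw [hqn] at ih
    rw [hqn1]
    rcases h.apply_succ_eq hn with hsucc | hsucc
    · rw [hsucc, hgap]
      omega
    · -- `p (p n) + 3` lies strictly between `q n` and `q (n + 1)`, so it is a value of `p`
      have hnot_q : ¬∃ i, 1 ≤ i ∧ q i = p (p n) + 3 := by
        rintro ⟨i, hi, hqi⟩
        rcases lt_trichotomy i n with hlt | rfl | hgt
        · have := h.q_add_two_le hi hlt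
          omega
        · omega
        · rcases eq_or_lt_of_le (show n + 1 ≤ i by omega) with rfl | hlt
          · omega
          · have := h.q_add_two_le (a := n + 1) (by omega) hlt
            omega
      obtain ⟨r, hr, hpr⟩ :=
        (h.exists_apply_eq_or_exists_q_eq (m := p (p n) + 3) (by omega)).resolve_right hnot_q
      obtain rfl := h.eq_add_one_of_apply_eq (a := p n + 1) (by omega) hr (by omega)
      rw [hsucc, hpr]
      omega

theorem exists_q_eq_of_apply_succ {k : ℕ} (hk : 1 ≤ k) (hsucc : p (k + 1) = p k + 1) :
    ∃ s, 1 ≤ s ∧ q s = k := by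
  refine (h.exists_apply_eq_or_exists_q_eq hk).resolve_left fun ⟨s, hs, hps⟩ => ?_
  have hq := h.apply_apply_add_one hs
  rw [hps] at hq
  exact h.apply_ne_q (by omega) hs (hsucc.trans hq)

end IsWythoffPair

/-- Wythoff sequences: `p 1 = 1`, `q n = p n + n` for `n ≥ 1`, and `p (n+1)` is the
smallest positive integer not contained in `U_n = {p 1, …, p n, q 1, …, q n}`. -/
theorem stmt_5 (p q : ℕ → ℕ)
    (hp1 : p 1 = 1)
    (hq : ∀ n, 1 ≤ n → q n = p n + n)
    (hmin : ∀ n, 1 ≤ n →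
      IsLeast {m : ℕ | 0 < m ∧ ∀ i, 1 ≤ i → i ≤ n → m ≠ p i ∧ m ≠ q i} (p (n + 1))) :
    ¬ ∃ m : ℕ, 0 < m ∧ (∃ k, 1 ≤ k ∧ p k = m) ∧ (∃ k, 1 ≤ k ∧ p k = m + 1) ∧
      (∃ k, 1 ≤ k ∧ p k = m + 2) := by
  have h : IsWythoffPair p q := ⟨hp1, hq, hmin⟩
  rintro ⟨m, -, ⟨a, ha, rfl⟩, ⟨b, hb, hab⟩, ⟨c, hc, hac⟩⟩
  obtain rfl := h.eq_add_one_of_apply_eq ha hb hab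
  obtain rfl := h.eq_add_one_of_apply_eq hb hc (by omega)
  obtain ⟨s, hs, hqs⟩ := h.exists_q_eq_of_apply_succ ha hab
  obtain ⟨t, ht, hqt⟩ := h.exists_q_eq_of_apply_succ hb (by omega)
  rcases lt_trichotomy s t with hst | rfl | hts
  · have := h.q_add_two_le hs hst
    omega
  · omega
  · have := h.q_add_two_le ht hts
    omega
end

section
/- For all n ≥ 1, q(n) = p(p(n)) + 1. -/
/-!
`p` is strictly increasing with `p n ≥ n`, the values of `p` and `q` are disjoint, and together
they cover every positive integer. Put `N = q n - 1`. The gaps `q (k + 1) - q k ≥ 2` show that `N`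
is not a `q`-value, so `N = p t` for some `t`. Counting `1, …, N`: exactly `t` of them are
`p`-values and `n - 1` are `q`-values, so `p n + n - 1 = N = t + (n - 1)`, i.e. `t = p n`.
-/

structure IsWythoffPair_s6 (p q : ℕ → ℕ) : Prop where
  one : p 1 = 1
  q_eq : ∀ n, 1 ≤ n → q n = p n + n
  isLeast : ∀ n, 1 ≤ n →
    IsLeast {m : ℕ | 0 < m ∧ ∀ i, 1 ≤ i → i ≤ n → m ≠ p i ∧ m ≠ q i} (p (n + 1))

namespace IsWythoffPair_s6

variable {p q : ℕ → ℕ}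

theorem lt_add_one (h : IsWythoffPair_s6 p q) {n : ℕ} (hn : 1 ≤ n) : p n < p (n + 1) := by
  have hmem := (h.isLeast n hn).1
  have hne : p (n + 1) ≠ p n := (hmem.2 n hn le_rfl).1
  rcases hn.eq_or_lt with rfl | hlt
  · have := hmem.1
    rw [h.one] at hne ⊢
    omega
  · -- `p (n + 1)` avoids `U_n ⊇ U_(n-1)`, and `p n` is the least positive integer avoiding `U_(n-1)`.
    have hle : p n ≤ p (n + 1) := by
      obtain ⟨m, rfl⟩ : ∃ m, n = m + 1 := ⟨n - 1, by omega⟩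
      exact (h.isLeast m (by omega)).2 ⟨hmem.1, fun i hi1 hi2 => hmem.2 i hi1 (by omega)⟩
    omega

theorem strictMonoOn (h : IsWythoffPair_s6 p q) : StrictMonoOn p (Set.Ici 1) :=
  strictMonoOn_of_lt_add_one Set.ordConnected_Ici fun _ _ ha _ => h.lt_add_one ha

theorem self_le (h : IsWythoffPair_s6 p q) {n : ℕ} (hn : 1 ≤ n) : n ≤ p n := by
  induction n, hn using Nat.le_induction with
  | base => exact h.one.ge
  | succ k hk ih => exact ih.trans_lt (h.lt_add_one hk)

theorem pos (h : IsWythoffPair_s6 p q) {n : ℕ} (hn : 1 ≤ n) : 0 < p n :=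
  hn.trans (h.self_le hn)

theorem add_two_le_q (h : IsWythoffPair_s6 p q) {n : ℕ} (hn : 1 ≤ n) : q n + 2 ≤ q (n + 1) := by
  rw [h.q_eq n hn, h.q_eq (n + 1) (by omega)]
  have := h.lt_add_one hn
  omega

theorem strictMonoOn_q (h : IsWythoffPair_s6 p q) : StrictMonoOn q (Set.Ici 1) :=
  strictMonoOn_of_lt_add_one Set.ordConnected_Ici fun _ _ ha _ => by
    have := h.add_two_le_q ha
    omega

theorem exists_eq_p_or_eq_q (h : IsWythoffPair_s6 p q) {m : ℕ} (hm : 1 ≤ m) :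
    ∃ i, 1 ≤ i ∧ (m = p i ∨ m = q i) := by
  by_contra! hcon
  have hle : p (m + 1) ≤ m := (h.isLeast m hm).2 ⟨hm, fun i hi _ => hcon i hi⟩
  have := h.self_le (n := m + 1) (by omega)
  omega

theorem p_ne_q (h : IsWythoffPair_s6 p q) {i j : ℕ} (hi : 1 ≤ i) (hj : 1 ≤ j) : p i ≠ q j := by
  rcases le_or_gt i j with hij | hji
  · have := h.strictMonoOn.monotoneOn hi hj hij
    rw [h.q_eq j hj]
    omega
  · obtain ⟨k, rfl⟩ : ∃ k, i = k + 1 := ⟨i - 1, by omega⟩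
    exact ((h.isLeast k (by omega)).1.2 j hj (by omega)).2

theorem q_ne_q_sub_one (h : IsWythoffPair_s6 p q) {k n : ℕ} (hk : 1 ≤ k) (hn : 1 ≤ n) :
    q k ≠ q n - 1 := by
  rcases lt_or_ge k n with hkn | hnk
  · have h2 := h.add_two_le_q hk
    have hmono := h.strictMonoOn_q.monotoneOn (a := k + 1) (by simp) hn hkn
    omega
  · have := h.strictMonoOn_q.monotoneOn hn hk hnk
    have := h.q_eq n hn
    omega

theorem q_le_q_sub_one_iff (h : IsWythoffPair_s6 p q) {k n : ℕ} (hk : 1 ≤ k) (hn : 1 ≤ n) :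
    q k ≤ q n - 1 ↔ k ≤ n - 1 := by
  have hne := h.q_ne_q_sub_one hk hn
  have hlt := h.strictMonoOn_q.lt_iff_lt (a := k) (b := n) hk hn
  omega

theorem eq_add_of_count (h : IsWythoffPair_s6 p q) {N a b : ℕ}
    (hpa : ∀ k, 1 ≤ k → (p k ≤ N ↔ k ≤ a)) (hqb : ∀ k, 1 ≤ k → (q k ≤ N ↔ k ≤ b)) :
    N = a + b := by
  have hcover : Finset.Icc 1 N = (Finset.Icc 1 a).image p ∪ (Finset.Icc 1 b).image q := by
    ext m
    simp only [Finset.mem_union, Finset.mem_image, Finset.mem_Icc]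
    constructor
    · rintro ⟨hm1, hmN⟩
      obtain ⟨i, hi, rfl | rfl⟩ := h.exists_eq_p_or_eq_q hm1
      · exact Or.inl ⟨i, ⟨hi, (hpa i hi).1 hmN⟩, rfl⟩
      · exact Or.inr ⟨i, ⟨hi, (hqb i hi).1 hmN⟩, rfl⟩
    · rintro (⟨k, ⟨hk, hka⟩, rfl⟩ | ⟨k, ⟨hk, hkb⟩, rfl⟩)
      · exact ⟨h.pos hk, (hpa k hk).2 hka⟩
      · exact ⟨by rw [h.q_eq k hk]; omega, (hqb k hk).2 hkb⟩
  have hdisj : Disjoint ((Finset.Icc 1 a).image p) ((Finset.Icc 1 b).image q) := by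
    simp only [Finset.disjoint_left, Finset.mem_image, Finset.mem_Icc]
    rintro _ ⟨i, ⟨hi, _⟩, rfl⟩ ⟨j, ⟨hj, _⟩, hji⟩
    exact h.p_ne_q hi hj hji.symm
  have hIci (c : ℕ) : (Finset.Icc 1 c : Set ℕ) ⊆ Set.Ici 1 := by
    rw [Finset.coe_Icc]
    exact Set.Icc_subset_Ici_self
  have hcard := congrArg Finset.card hcover
  rw [Finset.card_union_of_disjoint hdisj,
    Finset.card_image_of_injOn (h.strictMonoOn.injOn.mono (hIci a)),
    Finset.card_image_of_injOn (h.strictMonoOn_q.injOn.mono (hIci b))] at hcard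
  simpa using hcard

end IsWythoffPair_s6

/-- Wythoff sequences: `p 1 = 1`, `q n = p n + n` for `n ≥ 1`, and `p (n+1)` is the
smallest positive integer not contained in `U_n = {p 1, …, p n, q 1, …, q n}`. -/
theorem stmt_6 (p q : ℕ → ℕ)
    (hp1 : p 1 = 1)
    (hq : ∀ n, 1 ≤ n → q n = p n + n)
    (hmin : ∀ n, 1 ≤ n →
      IsLeast {m : ℕ | 0 < m ∧ ∀ i, 1 ≤ i → i ≤ n → m ≠ p i ∧ m ≠ q i} (p (n + 1))) :
    ∀ n, 1 ≤ n → q n = p (p n) + 1 := by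
  have h : IsWythoffPair_s6 p q := ⟨hp1, hq, hmin⟩
  intro n hn
  have hqn := hq n hn
  have hpn := h.pos hn
  obtain ⟨t, ht, hpt⟩ : ∃ t, 1 ≤ t ∧ p t = q n - 1 := by
    obtain ⟨t, ht, hpt | hqt⟩ := h.exists_eq_p_or_eq_q (m := q n - 1) (by omega)
    · exact ⟨t, ht, hpt.symm⟩
    · exact absurd hqt.symm (h.q_ne_q_sub_one ht hn)
  have hcount : q n - 1 = t + (n - 1) :=
    h.eq_add_of_count (fun k hk => hpt ▸ h.strictMonoOn.le_iff_le hk ht)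
      (fun k hk => h.q_le_q_sub_one_iff hk hn)
  obtain rfl : t = p n := by omega
  omega
end

section
/- For all n ≥ 1, p(n+1) equals (n+1) plus the number of integers i with 1 ≤ i ≤ n such that i appears in {p(1), p(2), ..., p(n)}. -/
/-!
Count, for a sequence `f`, the indices `i ≥ 1` with `f i ≤ x`. Since `p` and `q` are
increasing and their values partition the positive integers, these counts add up to `x`.
At `x = q j` exactly `j` values of `q` are counted, so `p j` values of `p` are, which gives
`q j < p (n + 1) ↔ p j ≤ n`. At `x = p (n + 1) - 1` the counts are therefore `n` for `p` and
the number of `j` with `p j ≤ n` for `q`, and they add up to `p (n + 1) - 1`.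
-/

open Finset

namespace Wythoff

/-- When `i ≤ f i` for `i ≥ 1`, this counts all indices `i ≥ 1` with `f i ≤ x`. -/
def countLE (f : ℕ → ℕ) (x : ℕ) : ℕ := #{i ∈ Icc 1 x | f i ≤ x}

section Counting

variable {f g : ℕ → ℕ}

theorem lt_countLE_iff (hf : StrictMonoOn f (Set.Ici 1)) (hid : ∀ i, 1 ≤ i → i ≤ f i)
    (k x : ℕ) : k < countLE f x ↔ f (k + 1) ≤ x := by
  constructor
  · intro hk
    by_contra! hx
    have hsub : {i ∈ Icc 1 x | f i ≤ x} ⊆ Icc 1 k := by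
      intro i hi
      simp only [mem_filter, mem_Icc] at hi ⊢
      refine ⟨hi.1.1, Nat.lt_add_one_iff.1 ?_⟩
      exact (hf.lt_iff_lt hi.1.1 (Nat.le_add_left 1 k)).1 (hi.2.trans_lt hx)
    have := card_le_card hsub
    rw [Nat.card_Icc] at this
    rw [countLE] at hk
    omega
  · intro hx
    have hsub : Icc 1 (k + 1) ⊆ {i ∈ Icc 1 x | f i ≤ x} := by
      intro i hi
      rw [mem_Icc] at hi
      have hfi : f i ≤ x := (hf.monotoneOn hi.1 (Nat.le_add_left 1 k) hi.2).trans hx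
      simpa only [mem_filter, mem_Icc] using ⟨⟨hi.1, (hid i hi.1).trans hfi⟩, hfi⟩
    have := card_le_card hsub
    rw [Nat.card_Icc] at this
    rw [countLE]
    omega

theorem countLE_add_countLE (hf : Set.InjOn f (Set.Ici 1)) (hg : Set.InjOn g (Set.Ici 1))
    (hfid : ∀ i, 1 ≤ i → i ≤ f i) (hgid : ∀ i, 1 ≤ i → i ≤ g i)
    (hfg : ∀ i j, 1 ≤ i → 1 ≤ j → f i ≠ g j)
    (hcover : ∀ m, 1 ≤ m → ∃ i, 1 ≤ i ∧ (f i = m ∨ g i = m)) (x : ℕ) :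
    countLE f x + countLE g x = x := by
  have hfilter : ∀ h : ℕ → ℕ, (({i ∈ Icc 1 x | h i ≤ x} : Finset ℕ) : Set ℕ) ⊆ Set.Ici 1 :=
    fun _ i hi => (mem_Icc.1 (mem_filter.1 hi).1).1
  have hunion : {i ∈ Icc 1 x | f i ≤ x}.image f ∪ {i ∈ Icc 1 x | g i ≤ x}.image g
      = Icc 1 x := by
    ext m
    simp only [mem_union, mem_image, mem_filter, mem_Icc]
    constructor
    · rintro (⟨i, ⟨⟨hi, -⟩, hix⟩, rfl⟩ | ⟨i, ⟨⟨hi, -⟩, hix⟩, rfl⟩)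
      · exact ⟨hi.trans (hfid i hi), hix⟩
      · exact ⟨hi.trans (hgid i hi), hix⟩
    · rintro ⟨hm, hmx⟩
      obtain ⟨i, hi, rfl | rfl⟩ := hcover m hm
      · exact .inl ⟨i, ⟨⟨hi, (hfid i hi).trans hmx⟩, hmx⟩, rfl⟩
      · exact .inr ⟨i, ⟨⟨hi, (hgid i hi).trans hmx⟩, hmx⟩, rfl⟩
  have hdisj : Disjoint ({i ∈ Icc 1 x | f i ≤ x}.image f)
      ({i ∈ Icc 1 x | g i ≤ x}.image g) := by
    simp only [disjoint_left, mem_image, mem_filter, mem_Icc]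
    rintro _ ⟨i, ⟨⟨hi, -⟩, -⟩, rfl⟩ ⟨j, ⟨⟨hj, -⟩, -⟩, hji⟩
    exact hfg i j hi hj hji.symm
  rw [countLE, countLE, ← card_image_of_injOn (hf.mono (hfilter f)),
    ← card_image_of_injOn (hg.mono (hfilter g)), ← card_union_of_disjoint hdisj, hunion,
    Nat.card_Icc, Nat.add_sub_cancel]

theorem card_filter_mem_image_eq_countLE (hf : Set.InjOn f (Set.Ici 1))
    (hpos : ∀ i, 1 ≤ i → 0 < f i) (n : ℕ) :
    #{i ∈ Icc 1 n | i ∈ (Icc 1 n).image f} = countLE f n := by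
  have hswap : {i ∈ Icc 1 n | i ∈ (Icc 1 n).image f}
      = {m ∈ (Icc 1 n).image f | m ∈ Icc 1 n} := by
    rw [filter_mem_eq_inter, filter_mem_eq_inter, inter_comm]
  rw [hswap, filter_image,
    card_image_of_injOn (hf.mono fun i hi => (mem_Icc.1 (mem_filter.1 hi).1).1), countLE]
  congr 1
  refine filter_congr fun i hi => ?_
  rw [mem_Icc, and_iff_right (Nat.one_le_of_lt (hpos i (mem_Icc.1 hi).1))]

end Counting

structure IsWythoffPair (p q : ℕ → ℕ) : Prop where
  one : p 1 = 1
  q_eq : ∀ n, 1 ≤ n → q n = p n + n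
  isLeast : ∀ n, 1 ≤ n →
    IsLeast {m : ℕ | 0 < m ∧ ∀ i, 1 ≤ i → i ≤ n → m ≠ p i ∧ m ≠ q i} (p (n + 1))

namespace IsWythoffPair

variable {p q : ℕ → ℕ}

theorem p_lt_p_succ (h : IsWythoffPair p q) {n : ℕ} (hn : 1 ≤ n) : p n < p (n + 1) := by
  obtain ⟨hpos, hfresh⟩ := (h.isLeast n hn).1
  have hne : p (n + 1) ≠ p n := (hfresh n hn le_rfl).1
  obtain rfl | ⟨k, hk, rfl⟩ : n = 1 ∨ ∃ k, 1 ≤ k ∧ n = k + 1 :=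
    (Nat.eq_or_lt_of_le hn).imp Eq.symm fun hlt => ⟨n - 1, by omega, by omega⟩
  · rw [h.one] at hne ⊢
    omega
  · have hle : p (k + 1) ≤ p (k + 1 + 1) :=
      (h.isLeast k hk).2 ⟨hpos, fun i hi hik => hfresh i hi (hik.trans k.le_succ)⟩
    exact hle.lt_of_ne hne.symm

theorem strictMonoOn_p (h : IsWythoffPair p q) : StrictMonoOn p (Set.Ici 1) :=
  strictMonoOn_of_lt_add_one Set.ordConnected_Ici fun _ _ ha _ => h.p_lt_p_succ ha

theorem self_le_p (h : IsWythoffPair p q) {i : ℕ} (hi : 1 ≤ i) : i ≤ p i := by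
  induction i, hi using Nat.le_induction with
  | base => exact h.one.ge
  | succ k hk ih => exact Nat.succ_le_of_lt (ih.trans_lt (h.p_lt_p_succ hk))

theorem strictMonoOn_q (h : IsWythoffPair p q) : StrictMonoOn q (Set.Ici 1) := by
  intro a ha b hb hab
  rw [h.q_eq a ha, h.q_eq b hb]
  exact Nat.add_lt_add_of_le_of_lt (h.strictMonoOn_p.monotoneOn ha hb hab.le) hab

theorem self_le_q (h : IsWythoffPair p q) {i : ℕ} (hi : 1 ≤ i) : i ≤ q i := by
  rw [h.q_eq i hi]
  exact Nat.le_add_left i (p i)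

theorem p_ne_q (h : IsWythoffPair p q) {i j : ℕ} (hi : 1 ≤ i) (hj : 1 ≤ j) : p i ≠ q j := by
  rcases le_or_gt i j with hij | hji
  · have := h.strictMonoOn_p.monotoneOn hi hj hij
    rw [h.q_eq j hj]
    omega
  · obtain ⟨k, rfl⟩ : ∃ k, i = k + 1 := ⟨i - 1, by omega⟩
    exact ((h.isLeast k (by omega)).1.2 j hj (by omega)).2

theorem exists_p_eq_or_q_eq (h : IsWythoffPair p q) {m : ℕ} (hm : 1 ≤ m) :
    ∃ i, 1 ≤ i ∧ (p i = m ∨ q i = m) := by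
  by_contra! hmiss
  have hle : p (m + 1) ≤ m :=
    (h.isLeast m hm).2 ⟨hm, fun i hi _ => ⟨(hmiss i hi).1.symm, (hmiss i hi).2.symm⟩⟩
  have := h.self_le_p (Nat.le_add_left 1 m)
  omega

theorem countLE_p_add_countLE_q (h : IsWythoffPair p q) (x : ℕ) :
    countLE p x + countLE q x = x :=
  countLE_add_countLE h.strictMonoOn_p.injOn h.strictMonoOn_q.injOn (fun _ => h.self_le_p)
    (fun _ => h.self_le_q) (fun _ _ => h.p_ne_q) (fun _ => h.exists_p_eq_or_q_eq) x

theorem lt_countLE_p_iff (h : IsWythoffPair p q) (k x : ℕ) :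
    k < countLE p x ↔ p (k + 1) ≤ x :=
  lt_countLE_iff h.strictMonoOn_p (fun _ => h.self_le_p) k x

theorem lt_countLE_q_iff (h : IsWythoffPair p q) (k x : ℕ) :
    k < countLE q x ↔ q (k + 1) ≤ x :=
  lt_countLE_iff h.strictMonoOn_q (fun _ => h.self_le_q) k x

theorem countLE_p_q (h : IsWythoffPair p q) {j : ℕ} (hj : 1 ≤ j) : countLE p (q j) = p j := by
  have hq : countLE q (q j) = j := eq_of_forall_lt_iff fun k => by
    rw [h.lt_countLE_q_iff, h.strictMonoOn_q.le_iff_le (Nat.le_add_left 1 k) hj]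
    omega
  have := h.countLE_p_add_countLE_q (q j)
  rw [hq] at this
  have := h.q_eq j hj
  omega

theorem q_lt_p_succ_iff (h : IsWythoffPair p q) {j : ℕ} (hj : 1 ≤ j) (n : ℕ) :
    q j < p (n + 1) ↔ p j ≤ n := by
  rw [← not_le, ← h.lt_countLE_p_iff, h.countLE_p_q hj, not_lt]

theorem p_succ_eq (h : IsWythoffPair p q) (n : ℕ) : p (n + 1) = n + 1 + countLE p n := by
  have hle := h.self_le_p (Nat.le_add_left 1 n)
  have hlt : ∀ x, x ≤ p (n + 1) - 1 ↔ x < p (n + 1) := fun x => by omega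
  have hp : countLE p (p (n + 1) - 1) = n := eq_of_forall_lt_iff fun k => by
    rw [h.lt_countLE_p_iff, hlt, h.strictMonoOn_p.lt_iff_lt (Nat.le_add_left 1 k)
      (Nat.le_add_left 1 n), Nat.add_lt_add_iff_right]
  have hq : countLE q (p (n + 1) - 1) = countLE p n := eq_of_forall_lt_iff fun k => by
    rw [h.lt_countLE_q_iff, hlt, h.q_lt_p_succ_iff (Nat.le_add_left 1 k), h.lt_countLE_p_iff]
  have := h.countLE_p_add_countLE_q (p (n + 1) - 1)
  rw [hp, hq] at this
  omega

end IsWythoffPair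

end Wythoff

/-- Wythoff sequences: `p 1 = 1`, `q n = p n + n` for `n ≥ 1`, and `p (n+1)` is the
smallest positive integer not contained in `U_n = {p 1, …, p n, q 1, …, q n}`. -/
theorem stmt_8 (p q : ℕ → ℕ)
    (hp1 : p 1 = 1)
    (hq : ∀ n, 1 ≤ n → q n = p n + n)
    (hmin : ∀ n, 1 ≤ n →
      IsLeast {m : ℕ | 0 < m ∧ ∀ i, 1 ≤ i → i ≤ n → m ≠ p i ∧ m ≠ q i} (p (n + 1))) :
    ∀ n, 1 ≤ n →
      p (n + 1) = (n + 1) + ((Finset.Icc 1 n).filter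
        (fun i => i ∈ (Finset.Icc 1 n).image p)).card := by
  intro n _
  have h : Wythoff.IsWythoffPair p q := ⟨hp1, hq, hmin⟩
  rw [Wythoff.card_filter_mem_image_eq_countLE h.strictMonoOn_p.injOn
    (fun _ hi => hi.trans (h.self_le_p hi)) n]
  exact h.p_succ_eq n
end

section
/- For all n ≥ 1, q(q(n)) = p(n) + 2·q(n); together with p(q(n)) = p(n) + q(n), this says that if (p(n), q(n)) is a p–q pair, then so is (p(n) + q(n), p(n) + 2·q(n)). -/
/-!
Consecutive values of `p` differ by `1` or `2`, by `2` exactly when the integer in between is a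
value of `q`, and values of `q` are never adjacent. The key identity `p (p n) + 1 = q n` then
follows by induction on `n`: it makes the gap after `p (p n)` equal to `2`, so
`p (p n + 1) = q n + 1`. If `p (n + 1) = p n + 1` this is the identity for `n + 1`; if
`p (n + 1) = p n + 2`, then `q (n + 1) = q n + 3`, so `q n + 2` is not a value of `q` and
`p (p n + 2) = q n + 2`. Applying the identity at `n` and at `p n` gives
`p (q n) = p (p (p n) + 1) = q (p n) + 1 = p n + q n`.
-/

structure IsWythoffPair_s11 (p q : ℕ → ℕ) : Prop where
  one : p 1 = 1
  q_eq : ∀ n, 1 ≤ n → q n = p n + n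
  isLeast : ∀ n, 1 ≤ n →
    IsLeast {m : ℕ | 0 < m ∧ ∀ i, 1 ≤ i → i ≤ n → m ≠ p i ∧ m ≠ q i} (p (n + 1))

namespace IsWythoffPair_s11

variable {p q : ℕ → ℕ}

theorem p_succ_le (h : IsWythoffPair_s11 p q) {n m : ℕ} (hn : 1 ≤ n) (hm : 0 < m)
    (hU : ∀ i, 1 ≤ i → i ≤ n → m ≠ p i ∧ m ≠ q i) : p (n + 1) ≤ m :=
  (h.isLeast n hn).2 ⟨hm, hU⟩

theorem p_succ_ne (h : IsWythoffPair_s11 p q) {n i : ℕ} (hn : 1 ≤ n) (hi : 1 ≤ i) (hin : i ≤ n) :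
    p (n + 1) ≠ p i ∧ p (n + 1) ≠ q i :=
  (h.isLeast n hn).1.2 i hi hin

theorem p_lt_p_succ (h : IsWythoffPair_s11 p q) {n : ℕ} (hn : 1 ≤ n) : p n < p (n + 1) := by
  have hne := (h.p_succ_ne hn hn le_rfl).1
  obtain rfl | hn2 := hn.eq_or_lt
  · have hpos := (h.isLeast 1 le_rfl).1.1
    have := h.one
    omega
  · obtain ⟨m, rfl⟩ : ∃ m, n = m + 1 := ⟨n - 1, by omega⟩
    have hle : p (m + 1) ≤ p (m + 1 + 1) :=
      h.p_succ_le (by omega) (h.isLeast _ hn).1.1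
        fun i hi him => h.p_succ_ne hn hi (by omega)
    omega

theorem p_lt_p (h : IsWythoffPair_s11 p q) {i j : ℕ} (hi : 1 ≤ i) (hij : i < j) : p i < p j := by
  induction j, hij using Nat.le_induction with
  | base => exact h.p_lt_p_succ hi
  | succ j hj ih => exact ih.trans (h.p_lt_p_succ (by omega))

theorem p_le_p (h : IsWythoffPair_s11 p q) {i j : ℕ} (hi : 1 ≤ i) (hij : i ≤ j) : p i ≤ p j := by
  obtain rfl | hij := hij.eq_or_lt
  · exact le_rfl
  · exact (h.p_lt_p hi hij).le

theorem le_p (h : IsWythoffPair_s11 p q) {n : ℕ} (hn : 1 ≤ n) : n ≤ p n := by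
  induction n, hn using Nat.le_induction with
  | base => exact h.one.ge
  | succ n hn ih => exact ih.trans_lt (h.p_lt_p_succ hn)

theorem q_le_q (h : IsWythoffPair_s11 p q) {i j : ℕ} (hi : 1 ≤ i) (hij : i ≤ j) : q i ≤ q j := by
  rw [h.q_eq i hi, h.q_eq j (hi.trans hij)]
  exact add_le_add (h.p_le_p hi hij) hij

theorem q_ne_q_add_one (h : IsWythoffPair_s11 p q) {i j : ℕ} (hi : 1 ≤ i) (hj : 1 ≤ j) :
    q i ≠ q j + 1 := by
  rcases le_or_gt i j with hij | hji
  · have := h.q_le_q hi hij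
    omega
  · have := h.p_lt_p hj hji
    rw [h.q_eq i hi, h.q_eq j hj]
    omega

theorem p_succ_of_forall_ne (h : IsWythoffPair_s11 p q) {k : ℕ} (hk : 1 ≤ k)
    (hnq : ∀ j, 1 ≤ j → q j ≠ p k + 1) : p (k + 1) = p k + 1 := by
  have hle : p (k + 1) ≤ p k + 1 :=
    h.p_succ_le hk (by omega) fun i hi hik =>
      ⟨by have := h.p_le_p hi hik; omega, (hnq i hi).symm⟩
  have := h.p_lt_p_succ hk
  omega

theorem p_succ_of_eq_q (h : IsWythoffPair_s11 p q) {k j : ℕ} (hk : 1 ≤ k) (hj : 1 ≤ j)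
    (hqj : q j = p k + 1) : p (k + 1) = p k + 2 := by
  have hjk : j ≤ k := by
    by_contra! hkj
    have := h.p_lt_p hk hkj
    rw [h.q_eq j hj] at hqj
    omega
  have hle : p (k + 1) ≤ p k + 2 :=
    h.p_succ_le hk (by omega) fun i hi hik =>
      ⟨by have := h.p_le_p hi hik; omega, by have := h.q_ne_q_add_one hi hj; omega⟩
  have hne := (h.p_succ_ne hk hj hjk).2
  have := h.p_lt_p_succ hk
  omega

theorem p_succ_eq_or (h : IsWythoffPair_s11 p q) {n : ℕ} (hn : 1 ≤ n) :
    p (n + 1) = p n + 1 ∨ p (n + 1) = p n + 2 := by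
  by_cases hq : ∃ j, 1 ≤ j ∧ q j = p n + 1
  · obtain ⟨j, hj, hqj⟩ := hq
    exact Or.inr (h.p_succ_of_eq_q hn hj hqj)
  · push Not at hq
    exact Or.inl (h.p_succ_of_forall_ne hn hq)

theorem p_p_add_one (h : IsWythoffPair_s11 p q) {n : ℕ} (hn : 1 ≤ n) : p (p n) + 1 = q n := by
  induction n, hn using Nat.le_induction with
  | base => rw [h.q_eq 1 le_rfl, h.one, h.one]
  | succ n hn ih =>
    have hpn := h.le_p hn
    have hqn := h.q_eq n hn
    have hqn' := h.q_eq (n + 1) (by omega)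
    have hgap : p (p n + 1) = q n + 1 := by
      rw [h.p_succ_of_eq_q (by omega) hn ih.symm, ← ih]
    rcases h.p_succ_eq_or hn with hstep | hstep
    · rw [hstep, hgap]
      omega
    · have hnq : ∀ j, 1 ≤ j → q j ≠ p (p n + 1) + 1 := by
        intro j hj
        rcases le_or_gt j n with hjn | hnj
        · have := h.q_le_q hj hjn
          omega
        · have := h.q_le_q (by omega : 1 ≤ n + 1) hnj
          omega
      rw [hstep, h.p_succ_of_forall_ne (by omega) hnq, hgap]
      omega

theorem p_q (h : IsWythoffPair_s11 p q) {n : ℕ} (hn : 1 ≤ n) : p (q n) = p n + q n := by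
  have hpn : 1 ≤ p n := hn.trans (h.le_p hn)
  have hqn := h.p_p_add_one hn
  have hqpn := h.p_p_add_one hpn
  have hq_pn := h.q_eq (p n) hpn
  calc p (q n) = p (p (p n) + 1) := by rw [hqn]
    _ = p (p (p n)) + 2 := h.p_succ_of_eq_q (hpn.trans (h.le_p hpn)) hpn hqpn.symm
    _ = p n + q n := by omega

end IsWythoffPair_s11

/-- Wythoff sequences: `p 1 = 1`, `q n = p n + n` for `n ≥ 1`, and `p (n+1)` is the
smallest positive integer not contained in `U_n = {p 1, …, p n, q 1, …, q n}`. -/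
theorem stmt_11 (p q : ℕ → ℕ)
    (hp1 : p 1 = 1)
    (hq : ∀ n, 1 ≤ n → q n = p n + n)
    (hmin : ∀ n, 1 ≤ n →
      IsLeast {m : ℕ | 0 < m ∧ ∀ i, 1 ≤ i → i ≤ n → m ≠ p i ∧ m ≠ q i} (p (n + 1))) :
    ∀ n, 1 ≤ n → p (q n) = p n + q n ∧ q (q n) = p n + 2 * q n := by
  intro n hn
  have h : IsWythoffPair_s11 p q := ⟨hp1, hq, hmin⟩
  have hpq := h.p_q hn
  have hqn : 1 ≤ q n := by rw [hq n hn]; omega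
  refine ⟨hpq, ?_⟩
  rw [hq (q n) hqn, hpq]
  ring
end

section
/- For all n ≥ 1, the error E(n) = p(n) - ⌊nφ⌋ satisfies E(n) ∈ {-1, 0, 1}, where φ = (1 + √5)/2 is the golden ratio; equivalently, |p(n) - ⌊nφ⌋| ≤ 1 for all n ≥ 1. -/
noncomputable def gr : ℝ := (1 + Real.sqrt 5) / 2

lemma sqrt5_sq : Real.sqrt 5 ^ 2 = 5 := Real.sq_sqrt (by norm_num)

lemma sqrt5_lt : Real.sqrt 5 < 3 := by
  nlinarith [sqrt5_sq, Real.sqrt_nonneg 5]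

lemma sqrt5_gt : 2 < Real.sqrt 5 := by
  nlinarith [sqrt5_sq, Real.sqrt_nonneg 5]

lemma one_lt_gr : 1 < gr := by unfold gr; nlinarith [sqrt5_gt]

lemma gr_lt_two : gr < 2 := by unfold gr; nlinarith [sqrt5_lt]

lemma gr_irr : Irrational gr := by
  have h5 : Irrational (Real.sqrt 5) := by
    have := (by norm_num : Nat.Prime 5).irrational_sqrt
    simpa using this
  have h1 : Irrational (1 + Real.sqrt 5) := by
    have := h5.ratCast_add 1
    simpa using this
  simpa [gr, div_eq_mul_inv] using h1.mul_ratCast (q := (2:ℚ)⁻¹) (by norm_num)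

lemma gr_sq : gr ^ 2 = gr + 1 := by
  unfold gr; nlinarith [sqrt5_sq]

lemma gr_conj : Real.HolderConjugate gr (gr + 1) := by
  rw [Real.holderConjugate_iff]
  constructor
  · exact one_lt_gr
  · have h0 : (0:ℝ) < gr := by linarith [one_lt_gr]
    have h1 : (0:ℝ) < gr + 1 := by linarith
    field_simp
    nlinarith [gr_sq]

/-- `a n = ⌊n * gr⌋`. -/
noncomputable def wa (n : ℕ) : ℤ := ⌊(n : ℝ) * gr⌋

lemma wa_eq_beatty (n : ℕ) : wa n = beattySeq gr (n : ℤ) := by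
  simp [wa, beattySeq]

lemma beatty'_eq (k : ℤ) : beattySeq (gr + 1) k = beattySeq gr k + k := by
  simp only [beattySeq, mul_add, mul_one]
  rw [Int.floor_add_intCast]

lemma wa_strictMono : StrictMono wa := by
  intro m n hmn
  have h1 : (wa m : ℝ) ≤ (m : ℝ) * gr := Int.floor_le _
  rw [Int.lt_iff_add_one_le]
  show wa m + 1 ≤ ⌊(n : ℝ) * gr⌋
  rw [Int.le_floor]
  push_cast
  have : (m : ℝ) + 1 ≤ n := by exact_mod_cast hmn
  nlinarith [one_lt_gr, (show (0:ℝ) ≤ (m:ℝ) by positivity)]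

lemma wa_ge (n : ℕ) : (n : ℤ) ≤ wa n := by
  show (n : ℤ) ≤ ⌊(n : ℝ) * gr⌋
  rw [Int.le_floor]
  push_cast
  nlinarith [one_lt_gr, Nat.cast_nonneg (α := ℝ) n]

lemma wa_one : wa 1 = 1 := by
  unfold wa
  rw [Int.floor_eq_iff]
  push_cast
  constructor
  · linarith [one_lt_gr]
  · linarith [gr_lt_two]

-- positivity of members of the Beatty set for gr
lemma beatty_pos {k j : ℤ} (hk : 0 < k) (h : beattySeq gr k = j) : 0 < j := by
  rw [← h, beattySeq, Int.floor_pos]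
  nlinarith [one_lt_gr, (show (1:ℝ) ≤ (k:ℝ) by exact_mod_cast hk)]

lemma cover {j : ℤ} (hj : 0 < j) :
    (∃ k > 0, beattySeq gr k = j) ∨ (∃ k > 0, beattySeq (gr + 1) k = j) := by
  have h := gr_irr.beattySeq_symmDiff_beattySeq_pos gr_conj
  have hjmem : j ∈ symmDiff {x : ℤ | ∃ k > 0, beattySeq gr k = x}
      {x : ℤ | ∃ k > 0, beattySeq (gr+1) k = x} := by
    rw [h]; exact hj
  rw [Set.mem_symmDiff] at hjmem
  rcases hjmem with ⟨h1, _⟩ | ⟨h1, _⟩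
  · exact Or.inl h1
  · exact Or.inr h1

lemma not_both {j : ℤ} (h1 : ∃ k > 0, beattySeq gr k = j)
    (h2 : ∃ k > 0, beattySeq (gr + 1) k = j) : False := by
  have h := gr_irr.beattySeq_symmDiff_beattySeq_pos gr_conj
  obtain ⟨k, hk, hkj⟩ := h1
  have hj : 0 < j := beatty_pos hk hkj
  have hjmem : j ∈ symmDiff {x : ℤ | ∃ k > 0, beattySeq gr k = x}
      {x : ℤ | ∃ k > 0, beattySeq (gr+1) k = x} := by
    rw [h]; exact hj
  rw [Set.mem_symmDiff] at hjmem
  rcases hjmem with ⟨_, hn⟩ | ⟨_, hn⟩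
  · exact hn h2
  · exact hn ⟨k, hk, hkj⟩

/-- Wythoff sequences: `p 1 = 1`, `q n = p n + n` for `n ≥ 1`, and `p (n+1)` is the
smallest positive integer not contained in `U_n = {p 1, …, p n, q 1, …, q n}`. -/

theorem stmt_13 (p q : ℕ → ℕ)
    (hp1 : p 1 = 1)
    (hq : ∀ n, 1 ≤ n → q n = p n + n)
    (hmin : ∀ n, 1 ≤ n →
      IsLeast {m : ℕ | 0 < m ∧ ∀ i, 1 ≤ i → i ≤ n → m ≠ p i ∧ m ≠ q i} (p (n + 1))) :
    ∀ n, 1 ≤ n →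
      (p n : ℤ) - ⌊(n : ℝ) * ((1 + Real.sqrt 5) / 2)⌋ ∈ ({-1, 0, 1} : Set ℤ) := by
  have main : ∀ n, 1 ≤ n → ∀ i, 1 ≤ i → i ≤ n → (p i : ℤ) = wa i := by
    intro n
    induction n with
    | zero => omega
    | succ n ih =>
      intro _ i hi1 hin
      rcases Nat.lt_or_ge i (n + 1) with hlt | hge
      · -- i ≤ n
        rcases Nat.eq_or_lt_of_le hi1 with h1 | h1
        · rw [← h1, hp1, wa_one]; norm_num
        · exact ih (by omega) i hi1 (by omega)
      · -- i = n + 1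
        have hin' : i = n + 1 := le_antisymm hin hge
        subst hin'
        rcases Nat.eq_or_lt_of_le hi1 with h1 | h1
        · have h2 : n + 1 = 1 := h1.symm
          rw [h2, hp1, wa_one]; norm_num
        · have hn1 : 1 ≤ n := by omega
          have ihp : ∀ i, 1 ≤ i → i ≤ n → (p i : ℤ) = wa i :=
            fun i a b => ih hn1 i a b
          set m₀ : ℕ := (wa (n + 1)).toNat with hm₀
          have hwapos : 0 < wa (n + 1) :=
            lt_of_lt_of_le (by exact_mod_cast Nat.succ_pos n) (wa_ge (n + 1))
          have hm₀c : (m₀ : ℤ) = wa (n + 1) := Int.toNat_of_nonneg hwapos.le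
          have hm₀pos : 0 < m₀ := by
            have : (0 : ℤ) < (m₀ : ℤ) := by rw [hm₀c]; exact hwapos
            exact_mod_cast this
          have hqwa : ∀ i, 1 ≤ i → i ≤ n → (q i : ℤ) = wa i + i := by
            intro i a b
            rw [hq i a]; push_cast; rw [ihp i a b]
          have hleast :
              IsLeast {m : ℕ | 0 < m ∧ ∀ i, 1 ≤ i → i ≤ n → m ≠ p i ∧ m ≠ q i} m₀ := by
            constructor
            · refine ⟨hm₀pos, fun i hi1 hin => ⟨?_, ?_⟩⟩
              · intro h
                have heq : wa (n + 1) = wa i := by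
                  rw [← hm₀c, h, ihp i hi1 hin]
                have := wa_strictMono.injective heq
                omega
              · intro h
                refine not_both (j := (m₀ : ℤ))
                  ⟨((n + 1 : ℕ) : ℤ), by exact_mod_cast Nat.succ_pos n, ?_⟩
                  ⟨((i : ℕ) : ℤ), by exact_mod_cast hi1, ?_⟩
                · rw [← wa_eq_beatty, hm₀c]
                · rw [beatty'_eq, ← wa_eq_beatty, ← hqwa i hi1 hin, ← h]
            · intro m hm
              by_contra hlt
              push_neg at hlt
              have hmpos : 0 < m := hm.1
              have hmlt : (m : ℤ) < wa (n + 1) := by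
                rw [← hm₀c]; exact_mod_cast hlt
              rcases cover (j := (m : ℤ)) (by exact_mod_cast hmpos) with
                ⟨k, hk, hkm⟩ | ⟨k, hk, hkm⟩
              · set k' := k.toNat with hk'
                have hkc : (k' : ℤ) = k := Int.toNat_of_nonneg hk.le
                have hwk : wa k' = (m : ℤ) := by rw [wa_eq_beatty, hkc, hkm]
                have hk'le : k' ≤ n := by
                  by_contra hgt
                  push_neg at hgt
                  have : wa (n + 1) ≤ wa k' := wa_strictMono.monotone (by omega)
                  omega
                have hk'1 : 1 ≤ k' := by
                  have : (0:ℤ) < (k' : ℤ) := by rw [hkc]; exact hk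
                  exact_mod_cast this
                refine (hm.2 k' hk'1 hk'le).1 ?_
                have : (m : ℤ) = (p k' : ℤ) := by rw [ihp k' hk'1 hk'le, hwk]
                exact_mod_cast this
              · set k' := k.toNat with hk'
                have hkc : (k' : ℤ) = k := Int.toNat_of_nonneg hk.le
                have hwk : wa k' + (k' : ℤ) = (m : ℤ) := by
                  rw [wa_eq_beatty, hkc, ← beatty'_eq, hkm]
                have hk'posZ : (0 : ℤ) < (k' : ℤ) := by rw [hkc]; exact hk
                have hk'le : k' ≤ n := by
                  by_contra hgt
                  push_neg at hgt
                  have h1 : wa (n + 1) ≤ wa k' := wa_strictMono.monotone (by omega)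
                  omega
                have hk'1 : 1 ≤ k' := by exact_mod_cast hk'posZ
                refine (hm.2 k' hk'1 hk'le).2 ?_
                have : (m : ℤ) = (q k' : ℤ) := by
                  rw [hqwa k' hk'1 hk'le, hwk]
                exact_mod_cast this
          have hpe : p (n + 1) = m₀ := (hmin n hn1).unique hleast
          rw [hpe, hm₀c]
  intro n hn
  have hkey : (p n : ℤ) = wa n := main n hn n hn le_rfl
  have : ⌊(n : ℝ) * ((1 + Real.sqrt 5) / 2)⌋ = wa n := rfl
  rw [this, hkey]
  simp
end
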